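/- arXiv:2009.06352 — 2 statements merged into one kernel-verified Lean document; each statement's English description precedes it below -/
import Mathlib

section
/- Let h, h̃ : ℝ^d → [0,1] be measurable weights with Z(h̃) ≤ Z(h). Then the total variation distance between the associated single-site specification measures satisfies d_TV(μ_h, μ_{h̃}) ≤ z ∫_Λ (h(x) − h̃(x))⁺ dx, where t⁺ := max(t,0). -/
open MeasureTheory

/-- Total variation distance between two measures: `sup_B |μ(B) − ν(B)|`. -/
noncomputable def tvDist {Ω : Type*} [MeasurableSpace Ω] (μ ν : Measure Ω) : ℝ :=
  ⨆ B : {B : Set Ω // MeasurableSet B}, |(μ B).toReal - (ν B).toReal|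

/-- The partition function `Z(h) = e^{−z|Λ|} (1 + z ∫_Λ h)`. -/
noncomputable def Zpart {d : ℕ} (Λ : Set (EuclideanSpace ℝ (Fin d))) (z : ℝ)
    (h : EuclideanSpace ℝ (Fin d) → ℝ) : ℝ :=
  Real.exp (-z * (volume Λ).toReal) * (1 + z * ∫ x in Λ, h x)

/-- The single-site specification measure `μ_h` on `{∗} ⊔ ℝ^d`: it puts mass
`e^{−z|Λ|}/Z(h)` on the atom `∗` (the empty configuration) and has density
`z e^{−z|Λ|} h(x)/Z(h)` w.r.t. Lebesgue measure on `Λ`. -/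
noncomputable def specMeasure {d : ℕ} (Λ : Set (EuclideanSpace ℝ (Fin d))) (z : ℝ)
    (h : EuclideanSpace ℝ (Fin d) → ℝ) :
    Measure (Unit ⊕ EuclideanSpace ℝ (Fin d)) :=
  (ENNReal.ofReal (Real.exp (-z * (volume Λ).toReal) / Zpart Λ z h)) •
      Measure.dirac (Sum.inl ()) +
    Measure.map Sum.inr
      ((volume.restrict Λ).withDensity fun x =>
        ENNReal.ofReal (z * Real.exp (-z * (volume Λ).toReal) * h x / Zpart Λ z h))

lemma specMeasure_apply_toReal {d : ℕ} {Λ : Set (EuclideanSpace ℝ (Fin d))}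
    (hvol : volume Λ ≠ ⊤) {z : ℝ} (hz : 0 < z)
    {h : EuclideanSpace ℝ (Fin d) → ℝ} (hmeas : Measurable h)
    (h0 : ∀ x, 0 ≤ h x) (h1 : ∀ x, h x ≤ 1) (hZpos : 0 < Zpart Λ z h)
    {B : Set (Unit ⊕ EuclideanSpace ℝ (Fin d))} (hB : MeasurableSet B) :
    ((specMeasure Λ z h) B).toReal =
      (Real.exp (-z * (volume Λ).toReal) / Zpart Λ z h) *
        (B.indicator (fun _ => (1 : ℝ)) (Sum.inl ())) +
      ∫ x in Sum.inr ⁻¹' B ∩ Λ,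
        z * Real.exp (-z * (volume Λ).toReal) * h x / Zpart Λ z h := by
  set e := Real.exp (-z * (volume Λ).toReal) with he_def
  have he : 0 < e := Real.exp_pos _
  set Z := Zpart Λ z h with hZ_def
  have hS : MeasurableSet (Sum.inr ⁻¹' B) := hB.preimage measurable_inr
  have hint : IntegrableOn (fun x => z * e * h x / Z) (Sum.inr ⁻¹' B ∩ Λ) volume := by
    refine (Measure.integrableOn_of_bounded (M := z * e / Z) hvol
      ((hmeas.const_mul _).div_const _).aestronglyMeasurable
      (Filter.Eventually.of_forall fun x => ?_)).mono_set Set.inter_subset_right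
    rw [Real.norm_eq_abs, abs_div,
      abs_of_nonneg (mul_nonneg (mul_nonneg hz.le he.le) (h0 x)), abs_of_nonneg hZpos.le]
    exact (div_le_div_iff_of_pos_right hZpos).2 (by nlinarith [mul_pos hz he, h0 x, h1 x])
  have hnn : 0 ≤ᵐ[volume.restrict (Sum.inr ⁻¹' B ∩ Λ)] fun x => z * e * h x / Z :=
    Filter.Eventually.of_forall fun x => div_nonneg (mul_nonneg (mul_nonneg hz.le he.le) (h0 x)) hZpos.le
  have hmap : (Measure.map Sum.inr
      ((volume.restrict Λ).withDensity fun x => ENNReal.ofReal (z * e * h x / Z))) B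
      = ENNReal.ofReal (∫ x in Sum.inr ⁻¹' B ∩ Λ, z * e * h x / Z) := by
    rw [Measure.map_apply measurable_inr hB, withDensity_apply _ hS,
      Measure.restrict_restrict hS, ofReal_integral_eq_lintegral_ofReal hint hnn]
  rw [specMeasure, Measure.add_apply, Measure.smul_apply, smul_eq_mul,
    Measure.dirac_apply' _ hB, ← he_def, ← hZ_def, hmap]
  by_cases hmem : Sum.inl () ∈ B
  · rw [Set.indicator_of_mem hmem, Set.indicator_of_mem hmem]
    simp only [Pi.one_apply, mul_one]
    rw [ENNReal.toReal_add ENNReal.ofReal_ne_top ENNReal.ofReal_ne_top,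
      ENNReal.toReal_ofReal (div_nonneg he.le hZpos.le),
      ENNReal.toReal_ofReal (integral_nonneg_of_ae hnn)]
  · rw [Set.indicator_of_notMem hmem, Set.indicator_of_notMem hmem]
    simp [ENNReal.toReal_ofReal (integral_nonneg_of_ae hnn)]

set_option maxHeartbeats 1600000 in
/-- Bound on the total variation distance between two single-site specification
measures with weights `h, h̃` taking values in `[0,1]`, when `Z(h̃) ≤ Z(h)`:
`d_TV(μ_h, μ_h̃) ≤ z ∫_Λ (h(x) − h̃(x))⁺ dx`. -/
theorem tvDist_specMeasure_le
    {d : ℕ} (Λ : Set (EuclideanSpace ℝ (Fin d)))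
    (hΛmeas : MeasurableSet Λ) (hΛbdd : Bornology.IsBounded Λ)
    (hΛpos : 0 < volume Λ)
    {z : ℝ} (hz : 0 < z)
    (h h' : EuclideanSpace ℝ (Fin d) → ℝ)
    (hmeas : Measurable h) (h'meas : Measurable h')
    (hrange : ∀ x, h x ∈ Set.Icc (0 : ℝ) 1) (h'range : ∀ x, h' x ∈ Set.Icc (0 : ℝ) 1)
    (hZ : Zpart Λ z h' ≤ Zpart Λ z h) :
    tvDist (specMeasure Λ z h) (specMeasure Λ z h') ≤
      z * ∫ x in Λ, max (h x - h' x) 0 := by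
  have hvol : volume Λ ≠ ⊤ := hΛbdd.measure_lt_top.ne
  have h0 : ∀ x, 0 ≤ h x := fun x => (hrange x).1
  have h1 : ∀ x, h x ≤ 1 := fun x => (hrange x).2
  have h'0 : ∀ x, 0 ≤ h' x := fun x => (h'range x).1
  have h'1 : ∀ x, h' x ≤ 1 := fun x => (h'range x).2
  set e := Real.exp (-z * (volume Λ).toReal) with he_def
  have he : 0 < e := Real.exp_pos _
  set I := ∫ x in Λ, h x with hI_def
  set I' := ∫ x in Λ, h' x with hI'_def
  set P := ∫ x in Λ, max (h x - h' x) 0 with hP_def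
  set Q := ∫ x in Λ, max (h' x - h x) 0 with hQ_def
  have intOn : ∀ (f : EuclideanSpace ℝ (Fin d) → ℝ) (C : ℝ), Measurable f →
      (∀ x, ‖f x‖ ≤ C) → IntegrableOn f Λ volume := fun f C hf hC =>
    Measure.integrableOn_of_bounded hvol hf.aestronglyMeasurable
      (Filter.Eventually.of_forall hC)
  have nb : ∀ (a : ℝ), 0 ≤ a → a ≤ 1 → ‖a‖ ≤ 1 := fun a h1 h2 => by
    rw [Real.norm_eq_abs, abs_of_nonneg h1]; exact h2
  have int_h : IntegrableOn h Λ volume := intOn h 1 hmeas fun x => nb _ (h0 x) (h1 x)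
  have int_h' : IntegrableOn h' Λ volume := intOn h' 1 h'meas fun x => nb _ (h'0 x) (h'1 x)
  have Pmeas : Measurable fun x => max (h x - h' x) 0 :=
    (hmeas.sub h'meas).max measurable_const
  have Qmeas : Measurable fun x => max (h' x - h x) 0 :=
    (h'meas.sub hmeas).max measurable_const
  have int_P : IntegrableOn (fun x => max (h x - h' x) 0) Λ volume :=
    intOn _ 1 Pmeas fun x => nb _ (le_max_right _ _)
      (max_le (by linarith [h1 x, h'0 x]) zero_le_one)
  have int_Q : IntegrableOn (fun x => max (h' x - h x) 0) Λ volume :=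
    intOn _ 1 Qmeas fun x => nb _ (le_max_right _ _)
      (max_le (by linarith [h'1 x, h0 x]) zero_le_one)
  have hI0 : 0 ≤ I := setIntegral_nonneg hΛmeas fun x _ => h0 x
  have hI'0 : 0 ≤ I' := setIntegral_nonneg hΛmeas fun x _ => h'0 x
  have hP0 : 0 ≤ P := setIntegral_nonneg hΛmeas fun x _ => le_max_right _ _
  have hQ0 : 0 ≤ Q := setIntegral_nonneg hΛmeas fun x _ => le_max_right _ _
  have hZh : Zpart Λ z h = e * (1 + z * I) := rfl
  have hZh' : Zpart Λ z h' = e * (1 + z * I') := rfl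
  have hZpos : 0 < Zpart Λ z h := by
    rw [hZh]; exact mul_pos he (by nlinarith)
  have hZ'pos : 0 < Zpart Λ z h' := by
    rw [hZh']; exact mul_pos he (by nlinarith)
  have heZ' : e ≤ Zpart Λ z h' := by
    rw [hZh']; nlinarith [mul_nonneg (mul_nonneg he.le hz.le) hI'0]
  have hPQ : P - Q = I - I' := by
    rw [hP_def, hQ_def, hI_def, hI'_def, ← integral_sub int_P int_Q,
      ← integral_sub int_h int_h']
    refine integral_congr_ae (Filter.Eventually.of_forall fun x => ?_)
    dsimp only
    rcases le_total (h x) (h' x) with hc | hc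
    · rw [max_eq_right (by linarith : h x - h' x ≤ 0),
        max_eq_left (by linarith : (0:ℝ) ≤ h' x - h x)]; ring
    · rw [max_eq_left (by linarith : (0:ℝ) ≤ h x - h' x),
        max_eq_right (by linarith : h' x - h x ≤ 0)]; ring
  clear_value e I I' P Q
  set c := z * e / Zpart Λ z h with hc_def
  set c' := z * e / Zpart Λ z h' with hc'_def
  have hc0 : 0 ≤ c := div_nonneg (by positivity) hZpos.le
  have hc'0 : 0 ≤ c' := div_nonneg (by positivity) hZ'pos.le
  have hcc' : c ≤ c' := by
    rw [hc_def, hc'_def]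
    exact div_le_div_of_nonneg_left (by positivity) hZ'pos hZ
  have hc'z : c' ≤ z := by
    rw [hc'_def, div_le_iff₀ hZ'pos]
    nlinarith
  clear_value c c'
  have : Nonempty {B : Set (Unit ⊕ EuclideanSpace ℝ (Fin d)) // MeasurableSet B} :=
    ⟨⟨∅, MeasurableSet.empty⟩⟩
  rw [tvDist]
  refine ciSup_le ?_
  rintro ⟨B, hB⟩
  rw [specMeasure_apply_toReal hvol hz hmeas h0 h1 hZpos hB,
    specMeasure_apply_toReal hvol hz h'meas h'0 h'1 hZ'pos hB, ← he_def]
  set S := Sum.inr ⁻¹' B ∩ Λ with hS_def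
  have hSsub : S ⊆ Λ := Set.inter_subset_right
  have hSmeas : MeasurableSet S := (hB.preimage measurable_inr).inter hΛmeas
  set ind := B.indicator (fun _ => (1 : ℝ)) (Sum.inl ()) with hind_def
  have hind0 : 0 ≤ ind := Set.indicator_nonneg (fun _ _ => zero_le_one) _
  clear_value S
  have hind1 : ind ≤ 1 := by
    rw [hind_def]; by_cases hm : Sum.inl () ∈ B <;> simp [hm]
  have hf_eq : ∀ x, z * e * h x / Zpart Λ z h = c * h x := fun x => by
    rw [hc_def]; ring
  have hf'_eq : ∀ x, z * e * h' x / Zpart Λ z h' = c' * h' x := fun x => by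
    rw [hc'_def]; ring
  have int_f : IntegrableOn (fun x => z * e * h x / Zpart Λ z h) S volume := by
    refine (IntegrableOn.mono_set (int_h.const_mul c : IntegrableOn _ Λ volume) hSsub).congr_fun (fun x _ => (hf_eq x).symm) hSmeas
  have int_f' : IntegrableOn (fun x => z * e * h' x / Zpart Λ z h') S volume := by
    refine (IntegrableOn.mono_set (int_h'.const_mul c' : IntegrableOn _ Λ volume) hSsub).congr_fun (fun x _ => (hf'_eq x).symm) hSmeas
  have int_zP : IntegrableOn (fun x => z * max (h x - h' x) 0) Λ volume :=
    (int_P.const_mul z : IntegrableOn _ Λ volume)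
  -- the function dominating the reverse density difference
  set g : EuclideanSpace ℝ (Fin d) → ℝ :=
    fun x => c' * max (h' x - h x) 0 + (c' - c) * h x with hg_def
  have int_g : IntegrableOn g Λ volume :=
    ((int_Q.const_mul c').add (int_h.const_mul (c' - c)) : IntegrableOn _ Λ volume)
  have hg0 : ∀ x, 0 ≤ g x := fun x =>
    add_nonneg (mul_nonneg hc'0 (le_max_right _ _))
      (mul_nonneg (by linarith) (h0 x))
  clear_value g ind
  rw [abs_sub_le_iff]
  constructor
  · -- μ(B) - ν(B) ≤ z * P
    have h1' : e / Zpart Λ z h * ind - e / Zpart Λ z h' * ind ≤ 0 := by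
      have : e / Zpart Λ z h ≤ e / Zpart Λ z h' :=
        div_le_div_of_nonneg_left he.le hZ'pos hZ
      nlinarith
    have h2' : (∫ x in S, z * e * h x / Zpart Λ z h) -
        (∫ x in S, z * e * h' x / Zpart Λ z h') ≤ z * P := by
      rw [← integral_sub int_f int_f']
      have step1 : (∫ x in S, (z * e * h x / Zpart Λ z h - z * e * h' x / Zpart Λ z h')) ≤
          ∫ x in S, z * max (h x - h' x) 0 := by
        refine setIntegral_mono_on (int_f.sub int_f') (IntegrableOn.mono_set int_zP hSsub) hSmeas
          fun x _ => ?_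
        rw [hf_eq x, hf'_eq x]
        have e1 : c * (h x - h' x) ≤ c * max (h x - h' x) 0 :=
          mul_le_mul_of_nonneg_left (le_max_left _ _) hc0
        have e2 : 0 ≤ (c' - c) * h' x := mul_nonneg (by linarith) (h'0 x)
        have e3 : 0 ≤ (z - c) * max (h x - h' x) 0 :=
          mul_nonneg (by linarith) (le_max_right _ _)
        nlinarith [e1, e2, e3]
      have step2 : (∫ x in S, z * max (h x - h' x) 0) ≤ ∫ x in Λ, z * max (h x - h' x) 0 :=
        setIntegral_mono_set int_zP
          (Filter.Eventually.of_forall fun x => mul_nonneg hz.le (le_max_right _ _))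
          (HasSubset.Subset.eventuallyLE hSsub)
      have step2' : (∫ x in Λ, z * max (h x - h' x) 0) = z * P := by
        rw [integral_const_mul, ← hP_def]
      linarith
    linarith
  · -- ν(B) - μ(B) ≤ z * P
    have h1' : e / Zpart Λ z h' * ind - e / Zpart Λ z h * ind ≤
        e / Zpart Λ z h' - e / Zpart Λ z h := by
      have : e / Zpart Λ z h ≤ e / Zpart Λ z h' :=
        div_le_div_of_nonneg_left he.le hZ'pos hZ
      nlinarith
    have h2' : (∫ x in S, z * e * h' x / Zpart Λ z h') -
        (∫ x in S, z * e * h x / Zpart Λ z h) ≤ c' * Q + (c' - c) * I := by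
      rw [← integral_sub int_f' int_f]
      have step1 : (∫ x in S, (z * e * h' x / Zpart Λ z h' - z * e * h x / Zpart Λ z h)) ≤
          ∫ x in S, g x := by
        refine setIntegral_mono_on (int_f'.sub int_f) (IntegrableOn.mono_set int_g hSsub) hSmeas
          fun x _ => ?_
        rw [hf_eq x, hf'_eq x, hg_def]
        dsimp only
        have e1 : c' * (h' x - h x) ≤ c' * max (h' x - h x) 0 :=
          mul_le_mul_of_nonneg_left (le_max_left _ _) hc'0
        linarith [e1]
      have step2 : (∫ x in S, g x) ≤ ∫ x in Λ, g x :=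
        setIntegral_mono_set int_g (Filter.Eventually.of_forall hg0)
          (HasSubset.Subset.eventuallyLE hSsub)
      have step3 : (∫ x in Λ, g x) = c' * Q + (c' - c) * I := by
        rw [hg_def, integral_add (int_Q.const_mul c') (int_h.const_mul (c' - c)),
          integral_const_mul, integral_const_mul, ← hQ_def, ← hI_def]
      linarith
    -- final algebraic inequality
    have key : (e / Zpart Λ z h' - e / Zpart Λ z h) + c' * Q + (c' - c) * I = c' * P := by
      have hP' : P = I - I' + Q := by linarith
      rw [hc_def, hc'_def, hZh, hZh', hP']
      have e1 : (1 : ℝ) + z * I ≠ 0 := by nlinarith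
      have e2 : (1 : ℝ) + z * I' ≠ 0 := by nlinarith
      field_simp
      ring
    have final : c' * P ≤ z * P := mul_le_mul_of_nonneg_right hc'z hP0
    linarith
end

section
/- Let φ : ℝ^d × ℝ^d → [0,∞] be measurable and β > 0. Then for every a > 0 and every i ∈ ℤ^d: Σ_{j∈ℤ^d, j≠i} sup_{y ∈ Λ_{a,j}} ∫_{Λ_{a,i}} (1 − e^{−βφ(x,y)}) dx ≤ sup_{x∈ℝ^d} ∫_{ℝ^d} Ψ_a(x,y) dy, as an inequality in [0,∞]. -/
open MeasureTheory ENNReal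

/-- The half-open cube `Λ_{a,j} = a j + (−a/2, a/2]^d` of side `a` centred at `a j`. -/
def cube (d : ℕ) (a : ℝ) (j : Fin d → ℤ) : Set (EuclideanSpace ℝ (Fin d)) :=
  {x | ∀ k : Fin d, x k - a * (j k : ℝ) ∈ Set.Ioc (-(a / 2)) (a / 2)}

/-- `expNegE t = e^{−t}` for `t ∈ [0,∞]` as an element of `[0,∞]`, with `e^{−∞} = 0`. -/
noncomputable def expNegE (t : ℝ≥0∞) : ℝ≥0∞ :=
  if t = ∞ then 0 else ENNReal.ofReal (Real.exp (-t.toReal))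

/-- The Mayer function `(x,y) ↦ 1 − e^{−βφ(x,y)}`, valued in `[0,∞]` (in fact `[0,1]`). -/
noncomputable def mayer {d : ℕ}
    (φ : EuclideanSpace ℝ (Fin d) → EuclideanSpace ℝ (Fin d) → ℝ≥0∞) (β : ℝ)
    (x y : EuclideanSpace ℝ (Fin d)) : ℝ≥0∞ :=
  1 - expNegE (ENNReal.ofReal β * φ x y)

/-- The discretised Mayer majorant
`Ψ_a(x,y) = Σ_{j∈ℤ^d} 1_{y ∈ Λ_{a,j}} · sup_{y' ∈ Λ_{a,j}} (1 − e^{−βφ(x,y')})`. -/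
noncomputable def Psi {d : ℕ}
    (φ : EuclideanSpace ℝ (Fin d) → EuclideanSpace ℝ (Fin d) → ℝ≥0∞) (β : ℝ) (a : ℝ)
    (x y : EuclideanSpace ℝ (Fin d)) : ℝ≥0∞ :=
  ∑' j : Fin d → ℤ,
    (cube d a j).indicator (fun _ => ⨆ y' ∈ cube d a j, mayer φ β x y') y

/-! Writing `f` for the Mayer function, bound `sup_{y ∈ Λ_j} ∫_{Λ_i} f(x,y) dx` by
`∫_{Λ_i} sup_{y ∈ Λ_j} f(x,y) dx`, exchange sum and integral, and bound the integrand
`Σ_j sup_{Λ_j} f(x,·)` by its supremum over `x`. Since all cubes have the same volume,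
`vol(Λ_i) · Σ_j sup_{Λ_j} f(x,·) = ∫ Ψ_a(x,y) dy`. -/

section Lebesgue

variable {α ι : Type*} [MeasurableSpace α] [Countable ι] (μ : Measure α)

/-- No measurability is needed: pass to measurable minorants with the same integrals. -/
theorem tsum_lintegral_le_lintegral_tsum (f : ι → α → ℝ≥0∞) :
    ∑' n, ∫⁻ x, f n x ∂μ ≤ ∫⁻ x, ∑' n, f n x ∂μ := by
  choose g hg_meas hg_le hg_eq using fun n => exists_measurable_le_lintegral_eq μ (f n)
  calc ∑' n, ∫⁻ x, f n x ∂μ = ∫⁻ x, ∑' n, g n x ∂μ := by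
        rw [lintegral_tsum fun n => (hg_meas n).aemeasurable]
        exact tsum_congr hg_eq
    _ ≤ ∫⁻ x, ∑' n, f n x ∂μ :=
        lintegral_mono fun x => ENNReal.tsum_le_tsum fun n => hg_le n x

theorem lintegral_tsum_indicator_const {s : ι → Set α} (hs : ∀ n, MeasurableSet (s n))
    (c : ι → ℝ≥0∞) : ∫⁻ x, ∑' n, (s n).indicator (fun _ => c n) x ∂μ = ∑' n, c n * μ (s n) := by
  rw [lintegral_tsum fun n => (measurable_const.indicator (hs n)).aemeasurable]
  exact tsum_congr fun n => lintegral_indicator_const (hs n) (c n)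

end Lebesgue

section Cube

variable (d : ℕ) (a : ℝ)

theorem measurableSet_cube (j : Fin d → ℤ) : MeasurableSet (cube d a j) := by
  have : cube d a j = ⋂ k : Fin d,
      (fun x : EuclideanSpace ℝ (Fin d) => x k - a * (j k : ℝ)) ⁻¹' Set.Ioc (-(a / 2)) (a / 2) := by
    ext x; simp [cube, Set.mem_iInter]
  rw [this]
  exact MeasurableSet.iInter fun k => (by fun_prop : Measurable _) measurableSet_Ioc

theorem volume_cube_eq (i j : Fin d → ℤ) : volume (cube d a j) = volume (cube d a i) := by
  let w : EuclideanSpace ℝ (Fin d) := WithLp.toLp 2 fun k => a * ((i k : ℝ) - j k)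
  have hshift : cube d a j = (· + w) ⁻¹' cube d a i := by
    ext x
    have (k : Fin d) : (x + w) k - a * (i k : ℝ) = x k - a * (j k : ℝ) := by
      change x k + a * ((i k : ℝ) - j k) - _ = _
      ring
    simp only [cube, Set.mem_preimage, Set.mem_ofPred_eq, this]
  rw [hshift, measure_preimage_add_right]

end Cube

theorem lintegral_Psi_eq {d : ℕ}
    (φ : EuclideanSpace ℝ (Fin d) → EuclideanSpace ℝ (Fin d) → ℝ≥0∞) (β a : ℝ)
    (i : Fin d → ℤ) (x : EuclideanSpace ℝ (Fin d)) :
    ∫⁻ y, Psi φ β a x y =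
      (∑' j : Fin d → ℤ, ⨆ y ∈ cube d a j, mayer φ β x y) * volume (cube d a i) := by
  unfold Psi
  rw [lintegral_tsum_indicator_const _ (measurableSet_cube d a), ← ENNReal.tsum_mul_right]
  exact tsum_congr fun j => by rw [volume_cube_eq d a i j]

theorem dobrushin_sum_le_sup_lintegral_Psi_general
    {d : ℕ} (φ : EuclideanSpace ℝ (Fin d) → EuclideanSpace ℝ (Fin d) → ℝ≥0∞)
    {β : ℝ} {a : ℝ} (i : Fin d → ℤ) :
    ∑' j : {j : Fin d → ℤ // j ≠ i},
        ⨆ y ∈ cube d a (j : Fin d → ℤ), ∫⁻ x in cube d a i, mayer φ β x y ≤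
      ⨆ x : EuclideanSpace ℝ (Fin d), ∫⁻ y, Psi φ β a x y := by
  set S : (Fin d → ℤ) → EuclideanSpace ℝ (Fin d) → ℝ≥0∞ :=
    fun j x => ⨆ y ∈ cube d a j, mayer φ β x y
  calc ∑' j : {j : Fin d → ℤ // j ≠ i},
        ⨆ y ∈ cube d a (j : Fin d → ℤ), ∫⁻ x in cube d a i, mayer φ β x y
      ≤ ∑' j : {j : Fin d → ℤ // j ≠ i}, ∫⁻ x in cube d a i, S j x :=
        ENNReal.tsum_le_tsum fun j => iSup₂_lintegral_le _
    _ ≤ ∫⁻ x in cube d a i, ∑' j : {j : Fin d → ℤ // j ≠ i}, S j x :=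
        tsum_lintegral_le_lintegral_tsum _ _
    _ ≤ ∫⁻ _ in cube d a i, ⨆ x, ∑' j, S j x :=
        lintegral_mono fun x =>
          (ENNReal.tsum_comp_le_tsum_of_injective Subtype.val_injective (S · x)).trans
            (le_iSup (fun x => ∑' j, S j x) x)
    _ = ⨆ x, ∫⁻ y, Psi φ β a x y := by
        simp only [setLIntegral_const, ENNReal.iSup_mul, lintegral_Psi_eq φ β a i, S]

/-- The Dobrushin one-site sum of the discretised continuum model is bounded by the
uniform integral of the discretised Mayer majorant `Ψ_a`. -/
theorem dobrushin_sum_le_sup_lintegral_Psi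
    {d : ℕ} (φ : EuclideanSpace ℝ (Fin d) → EuclideanSpace ℝ (Fin d) → ℝ≥0∞)
    (hφ : Measurable (Function.uncurry φ))
    {β : ℝ} (hβ : 0 < β) {a : ℝ} (ha : 0 < a) (i : Fin d → ℤ) :
    ∑' j : {j : Fin d → ℤ // j ≠ i},
        ⨆ y ∈ cube d a (j : Fin d → ℤ), ∫⁻ x in cube d a i, mayer φ β x y ≤
      ⨆ x : EuclideanSpace ℝ (Fin d), ∫⁻ y, Psi φ β a x y :=
  dobrushin_sum_le_sup_lintegral_Psi_general φ i
end
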